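/- arXiv:1205.4250 — 3 statements merged into one kernel-verified Lean document; each statement's English description precedes it below -/
import Mathlib

section
/- Let F_q have characteristic p and let m be a positive integer with m ≢ 0 (mod p) and m ≢ 1 (mod p). Then the number of multisets of m nonzero elements of F_q summing to 0 equals the number of multisets of m nonzero elements summing to 1. -/
/-!
Let `N_m(z)` count all `m`-multisets of elements of `F` (zero allowed) with sum `z`. Translating
every element by `t` turns sum `z` into sum `z + m t`, so `N_m` is constant as soon as `m ≠ 0`
in `F`. Splitting off the multisets that contain `0` and removing one copy of it gives
`N_{m+1}(z) = P_{m+1}(z) + N_m(z)`. Hence `P_m(z) = N_m(z) - N_{m-1}(z)` does not depend on `z`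
when neither `m` nor `m - 1` vanishes in `F`, i.e. when `m ≢ 0, 1 (mod p)`.
-/

/-- The number of multisets of `m` nonzero elements of `F` whose sum is `z`. -/
def partitionCount (F : Type*) [Field F] [Fintype F] [DecidableEq F]
    (m : ℕ) (z : F) : ℕ :=
  (Finset.univ.filter
    (fun s : Sym F m => (0 : F) ∉ (s : Multiset F) ∧ (s : Multiset F).sum = z)).card

open Finset

def symSumCount (M : Type*) [AddCommMonoid M] [Fintype M] [DecidableEq M] (m : ℕ) (z : M) : ℕ :=
  #{s : Sym M m | (s : Multiset M).sum = z}

section AddCommMonoid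

variable {M : Type*} [AddCommMonoid M]

lemma Sym.sum_map_add_const {m : ℕ} (t : M) (s : Sym M m) :
    ((s.map (· + t) : Sym M m) : Multiset M).sum = (s : Multiset M).sum + m • t := by
  rcases s with ⟨s, rfl⟩
  simp [Sym.map, Multiset.sum_map_add, Multiset.map_const']

variable [Fintype M] [DecidableEq M]

lemma card_filter_zero_mem_sym_succ (m : ℕ) (z : M) :
    #{s : Sym M (m + 1) | (0 : M) ∈ (s : Multiset M) ∧ (s : Multiset M).sum = z}
      = symSumCount M m z := by
  refine card_bij' (fun s hs => s.erase 0 (Sym.mem_coe.mp (mem_filter.mp hs).2.1))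
    (fun s _ => 0 ::ₛ s) ?_ ?_ (fun s _ => Sym.cons_erase _) (fun s _ => Sym.erase_cons_head _ _)
  · intro s hs
    obtain ⟨hzero, hsum⟩ := (mem_filter.mp hs).2
    simp only [mem_filter, mem_univ, true_and]
    rw [Sym.coe_erase, ← hsum, ← Multiset.sum_erase hzero, zero_add]
  · intro s hs
    simp_all [Sym.coe_cons]

end AddCommMonoid

lemma symSumCount_add_nsmul {M : Type*} [AddCommGroup M] [Fintype M] [DecidableEq M]
    (m : ℕ) (z t : M) : symSumCount M m (z + m • t) = symSumCount M m z := by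
  refine (card_equiv (Sym.equivCongr (Equiv.addRight t)) fun s => ?_).symm
  simp only [mem_filter, mem_univ, true_and]
  change _ ↔ ((s.map (· + t) : Sym M m) : Multiset M).sum = _
  rw [Sym.sum_map_add_const, add_left_inj]

lemma symSumCount_eq_of_cast_ne_zero {F : Type*} [DivisionRing F] [Fintype F] [DecidableEq F]
    {m : ℕ} (hm : (m : F) ≠ 0) (z z' : F) : symSumCount F m z = symSumCount F m z' := by
  have key := symSumCount_add_nsmul m z ((m : F)⁻¹ * (z' - z))
  rw [nsmul_eq_mul, ← mul_assoc, mul_inv_cancel₀ hm, one_mul, add_sub_cancel] at key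
  exact key.symm

section Field

variable {F : Type*} [Field F] [Fintype F] [DecidableEq F]

lemma partitionCount_succ_add_symSumCount (m : ℕ) (z : F) :
    partitionCount F (m + 1) z + symSumCount F m z = symSumCount F (m + 1) z := by
  rw [← card_filter_zero_mem_sym_succ, add_comm, partitionCount, symSumCount,
    ← card_filter_add_card_filter_not (s := {s : Sym F (m + 1) | (s : Multiset F).sum = z})
      (fun s => (0 : F) ∈ (s : Multiset F)),
    filter_filter, filter_filter]
  simp only [and_comm]

lemma partitionCount_succ_eq_of_cast_ne_zero {m : ℕ} (hm : (m : F) ≠ 0)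
    (hm' : ((m + 1 : ℕ) : F) ≠ 0) (z z' : F) :
    partitionCount F (m + 1) z = partitionCount F (m + 1) z' := by
  have hz := partitionCount_succ_add_symSumCount m z
  have hz' := partitionCount_succ_add_symSumCount m z'
  rw [symSumCount_eq_of_cast_ne_zero hm z z', symSumCount_eq_of_cast_ne_zero hm' z z'] at hz
  omega

end Field

theorem stmt_1 (F : Type*) [Field F] [Fintype F] [DecidableEq F]
    (p : ℕ) [Fact p.Prime] [CharP F p] (m : ℕ) (hm : 0 < m)
    (h0 : ¬ m % p = 0) (h1 : ¬ m % p = 1) :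
    partitionCount F m 0 = partitionCount F m 1 := by
  obtain ⟨k, rfl⟩ := Nat.exists_eq_add_of_lt hm
  rw [zero_add] at h0 h1 ⊢
  have hk : ((k : ℕ) : F) ≠ 0 := by
    rw [Ne, CharP.cast_eq_zero_iff F p]
    intro hpk
    apply h1
    rw [Nat.add_mod, Nat.mod_eq_zero_of_dvd hpk, zero_add, Nat.mod_mod,
      Nat.mod_eq_of_lt (Fact.out : p.Prime).one_lt]
  have hk' : ((k + 1 : ℕ) : F) ≠ 0 := by
    rwa [Ne, CharP.cast_eq_zero_iff F p, Nat.dvd_iff_mod_eq_zero]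
  exact partitionCount_succ_eq_of_cast_ne_zero hk hk' 0 1
end

section
/- Let F_q have characteristic p, z ∈ F_q, and m a positive integer with m ≢ 0 (mod p) and m ≢ 1 (mod p). Then the number of multisets of m nonzero elements of F_q summing to z equals (1/q)·C(q+m−2, m). -/
/-- Count of all multisets of size m summing to z. -/
def allCount (F : Type*) [Field F] [Fintype F] [DecidableEq F] (m : ℕ) (z : F) : ℕ :=
  (Finset.univ.filter (fun s : Sym F m => (s : Multiset F).sum = z)).card

lemma sum_map_add_const {F : Type*} [Field F] (s : Multiset F) (t : F) :
    (s.map (· + t)).sum = s.sum + (Multiset.card s) • t := by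
  induction s using Multiset.induction with
  | empty => simp
  | cons a s ih =>
      simp only [Multiset.map_cons, Multiset.sum_cons, ih, Multiset.card_cons, succ_nsmul]
      abel

lemma allCount_const (F : Type*) [Field F] [Fintype F] [DecidableEq F]
    (m : ℕ) (hm : (m : F) ≠ 0) (z z' : F) : allCount F m z = allCount F m z' := by
  classical
  set t : F := (z' - z) / m with ht
  have hmt : (m : F) * t = z' - z := by
    rw [ht]; field_simp
  apply Finset.card_bij' (fun s _ => Sym.map (· + t) s) (fun s _ => Sym.map (· + (-t)) s)
  · intro s hs
    simp only [Finset.mem_filter, Finset.mem_univ, true_and] at hs ⊢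
    rw [Sym.coe_map, sum_map_add_const, hs, Sym.card_coe, nsmul_eq_mul]
    linear_combination hmt
  · intro s hs
    simp only [Finset.mem_filter, Finset.mem_univ, true_and] at hs ⊢
    rw [Sym.coe_map, sum_map_add_const, hs, Sym.card_coe, nsmul_eq_mul]
    linear_combination -hmt
  · intro s _
    have h : ((· + (-t)) ∘ (· + t)) = (id : F → F) := by funext x; simp
    rw [Sym.map_map, h, Sym.map_id]
  · intro s _
    have h : ((· + t) ∘ (· + (-t))) = (id : F → F) := by funext x; simp
    rw [Sym.map_map, h, Sym.map_id]

lemma sum_allCount (F : Type*) [Field F] [Fintype F] [DecidableEq F] (m : ℕ) :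
    ∑ z : F, allCount F m z = (Fintype.card F + m - 1).choose m := by
  classical
  have := Finset.card_eq_sum_card_fiberwise
    (f := fun s : Sym F m => (s : Multiset F).sum) (s := Finset.univ) (t := Finset.univ)
    (fun x _ => Finset.mem_univ _)
  rw [Finset.card_univ, Sym.card_sym_eq_choose] at this
  unfold allCount
  rw [this]

lemma q_mul_allCount (F : Type*) [Field F] [Fintype F] [DecidableEq F]
    (m : ℕ) (hm : (m : F) ≠ 0) (z : F) :
    Fintype.card F * allCount F m z = (Fintype.card F + m - 1).choose m := by
  rw [← sum_allCount F m]
  rw [Finset.sum_congr rfl (fun z' _ => allCount_const F m hm z' z)]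
  simp [Finset.sum_const, Finset.card_univ, mul_comm]

lemma allCount_split (F : Type*) [Field F] [Fintype F] [DecidableEq F]
    (n : ℕ) (z : F) :
    allCount F (n + 1) z = partitionCount F (n + 1) z + allCount F n z := by
  classical
  unfold allCount partitionCount
  rw [← Finset.card_filter_add_card_filter_not
    (p := fun s : Sym F (n+1) => (0:F) ∉ (s : Multiset F)) (s := Finset.univ.filter
      (fun s : Sym F (n+1) => (s : Multiset F).sum = z))]
  congr 1
  · congr 1
    rw [Finset.filter_filter]
    apply Finset.filter_congr
    intro s _
    simp [and_comm]
  · rw [Finset.filter_filter]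
    refine Finset.card_bij' (fun s hs => Sym.erase s 0 ?_) (fun t _ => (0:F) ::ₛ t) ?_ ?_ ?_ ?_
    · simp only [Finset.mem_filter, Finset.mem_univ, true_and, not_not] at hs
      exact Sym.mem_coe.mp hs.2
    · intro s hs
      simp only [Finset.mem_filter, Finset.mem_univ, true_and, not_not] at hs ⊢
      have h0 : (0:F) ∈ s := Sym.mem_coe.mp hs.2
      have := Multiset.sum_erase (s := (s : Multiset F)) (a := (0:F)) hs.2
      rw [Sym.coe_erase]
      rw [← hs.1, ← this]
      simp
    · intro t ht
      simp only [Finset.mem_filter, Finset.mem_univ, true_and, not_not] at ht ⊢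
      constructor
      · rw [← ht]
        rw [Sym.coe_cons]
        simp
      · exact Sym.mem_coe.mpr (Sym.mem_cons_self 0 t)
    · intro s hs
      exact Sym.cons_erase _
    · intro t ht
      exact Sym.erase_cons_head t 0 _

theorem stmt_2 (F : Type*) [Field F] [Fintype F] [DecidableEq F]
    (p : ℕ) [Fact p.Prime] [CharP F p] (q : ℕ) (hq : q = Fintype.card F)
    (m : ℕ) (hm : 0 < m) (h0 : ¬ m % p = 0) (h1 : ¬ m % p = 1) (z : F) :
    (partitionCount F m z : ℚ) = (Nat.choose (q + m - 2) m : ℚ) / q := by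
  obtain ⟨n, rfl⟩ : ∃ n, m = n + 1 := ⟨m - 1, by omega⟩
  subst hq
  have hq1 : 1 ≤ Fintype.card F := Fintype.card_pos
  have hp2 : 2 ≤ p := (Fact.out : p.Prime).two_le
  have h1p : 1 % p = 1 := Nat.mod_eq_of_lt hp2
  have hmF : ((n + 1 : ℕ) : F) ≠ 0 := by
    rw [Ne, CharP.cast_eq_zero_iff F p, Nat.dvd_iff_mod_eq_zero]
    exact h0
  have hn : ¬ n % p = 0 := by
    intro h
    apply h1
    rw [Nat.add_mod, h, zero_add, h1p, h1p]
  have hnF : ((n : ℕ) : F) ≠ 0 := by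
    rw [Ne, CharP.cast_eq_zero_iff F p, Nat.dvd_iff_mod_eq_zero]
    exact hn
  have e1 := q_mul_allCount F (n + 1) hmF z
  have e2 := q_mul_allCount F n hnF z
  have e3 := allCount_split F n z
  have epascal : (Fintype.card F + (n + 1) - 1).choose (n + 1)
      = (Fintype.card F + n - 1).choose n + (Fintype.card F + n - 1).choose (n + 1) := by
    rw [show Fintype.card F + (n + 1) - 1 = (Fintype.card F + n - 1) + 1 by omega]
    exact Nat.choose_succ_succ _ _
  have hkey : Fintype.card F * partitionCount F (n + 1) z
      = (Fintype.card F + n - 1).choose (n + 1) := by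
    rw [e3, Nat.mul_add] at e1
    omega
  have hchoose : Fintype.card F + (n + 1) - 2 = Fintype.card F + n - 1 := by omega
  rw [hchoose]
  have hq0 : ((Fintype.card F : ℕ) : ℚ) ≠ 0 := by positivity
  rw [eq_div_iff hq0]
  rw [mul_comm]
  exact_mod_cast congrArg (fun x : ℕ => (x : ℚ)) hkey
end

section
/- Let F_q be a finite field of q = p^r elements, m ≥ 0, and z ∈ F_q. The number of multisets of m nonzero elements of F_q summing to z equals (1/q)·C(q+m−2, m) + D_m(z), where D_m(z) = 0 if m ≢ 0, 1 (mod p); D_m(0) = ((q−1)/q)·C(q/p−1+j, j) and D_m(z) = −(1/q)·C(q/p−1+j, j) for z ≠ 0 when m = jp with j ≥ 0; and D_m(0) = −((q−1)/q)·C(q/p−1+j, j) and D_m(z) = (1/q)·C(q/p−1+j, j) for z ≠ 0 when m = jp+1 with j ≥ 0. -/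
/-!
Fix a primitive additive character `ψ` of `F`. By orthogonality,
`q · P_m(z) = ∑ₜ ψ(-t z) ∑ₛ ψ(t · ∑ s)`, where `s` runs over the multisets of `m` nonzero
elements, and the inner sum is the coefficient of `X^m` in `∏_{a ≠ 0} (1 - ψ(t a) X)⁻¹`.
For `t = 0` this series is `(1 - X)^{-(q-1)}`, whose coefficient is `C(q+m-2, m)`.
For `t ≠ 0` the character `a ↦ ψ(t a)` is nontrivial, so it takes every `p`-th root of unity
exactly `q/p` times and `∏_{a ∈ F} (1 - ψ(t a) X) = (1 - X^p)^{q/p}`. Hence the inner sum is the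
coefficient of `X^m` in `(1 - X) (1 - X^p)^{-q/p}`, independent of `t`, while
`∑_{t ≠ 0} ψ(-t z) = q [z = 0] - 1`.
-/

open Finset PowerSeries

namespace PowerSeries

section CommSemiring

variable {R : Type*} [CommSemiring R]

theorem coeff_prod_mk_pow {ι : Type*} [DecidableEq ι] (S : Finset ι) (x : ι → R) (m : ℕ) :
    coeff m (∏ i ∈ S, mk fun n => x i ^ n) = ∑ s ∈ S.sym m, ((s : Multiset ι).map x).prod := by
  rw [coeff_prod]
  simp only [coeff_mk]
  symm
  refine sum_bij' (fun s _ => Multiset.toFinsupp (s : Multiset ι))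
    (fun l hl => Sym.mk (Finsupp.toMultiset l) ?_) ?_ ?_ ?_ ?_ ?_
  · rw [mem_finsuppAntidiag] at hl
    rw [Finsupp.card_toMultiset, ← hl.1, Finsupp.sum_of_support_subset _ hl.2] <;> simp
  · intro s hs
    rw [mem_sym_iff] at hs
    simp only [mem_finsuppAntidiag, Multiset.toFinsupp_support]
    refine ⟨?_, fun a ha => hs a (by simpa using ha)⟩
    change ∑ a ∈ S, (s : Multiset ι).count a = m
    simpa using Multiset.sum_count_eq_card hs
  · intro l hl
    rw [mem_finsuppAntidiag] at hl
    exact mem_sym_iff.2 fun a ha => hl.2 (by simpa using ha)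
  · intro s _
    ext1
    simp
  · intro l _
    simp
  · intro s hs
    rw [mem_sym_iff] at hs
    rw [prod_multiset_map_count]
    refine prod_subset (fun a ha => hs a (Multiset.mem_toFinset.1 ha)) fun a _ ha => ?_
    rw [Multiset.count_eq_zero.2 (by simpa using ha), pow_zero]

end CommSemiring

variable {R : Type*} [CommRing R] {p : ℕ}

theorem mk_pow_mul_one_sub_C_mul_X (a : R) : (mk fun n => a ^ n) * (1 - C a * X) = 1 := by
  simpa [rescale_mk, rescale_X] using congrArg (rescale a) (mk_one_mul_one_sub_eq_one R)

theorem coeff_mk_one_pow {k : ℕ} (hk : k ≠ 0) (j : ℕ) :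
    coeff j ((mk 1 : R⟦X⟧) ^ k) = ((k - 1 + j).choose j : R) := by
  obtain ⟨k, rfl⟩ := Nat.exists_eq_succ_of_ne_zero hk
  rw [mk_one_pow_eq_mk_choose_add, coeff_mk, Nat.succ_sub_one, Nat.choose_symm_add]

theorem coeff_invOneSubPow {k : ℕ} (hk : k ≠ 0) (j : ℕ) :
    coeff j (invOneSubPow R k).val = ((k - 1 + j).choose j : R) := by
  rw [invOneSubPow_val_eq_mk_sub_one_add_choose_of_pos _ _ (by omega), coeff_mk,
    Nat.choose_symm_add]

theorem expand_invOneSubPow_mul_one_sub_X_pow_pow (hp : p ≠ 0) (k : ℕ) :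
    expand p hp (invOneSubPow R k).val * (1 - X ^ p) ^ k = 1 := by
  have := congrArg (expand p hp) (invOneSubPow R k).val_inv
  rwa [invOneSubPow_inv_eq_one_sub_pow, map_mul, map_pow, map_sub, map_one, expand_X] at this

theorem coeff_one_sub_X_mul_expand (hp : p ≠ 0) (f : R⟦X⟧) (m : ℕ) :
    coeff m ((1 - X) * expand p hp f) =
      (if p ∣ m then coeff (m / p) f else 0)
        - if 1 ≤ m ∧ p ∣ m - 1 then coeff ((m - 1) / p) f else 0 := by
  rw [sub_mul, one_mul, map_sub, ← pow_one X, coeff_X_pow_mul', coeff_expand]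
  by_cases hm : 1 ≤ m
  · simp [hm, coeff_expand]
  · simp [hm]

theorem coeff_one_sub_X_mul_expand_mul (hp : 1 < p) (f : R⟦X⟧) (j : ℕ) :
    coeff (j * p) ((1 - X) * expand p (by omega) f) = coeff j f := by
  have : ¬ (1 ≤ j * p ∧ p ∣ j * p - 1) := by
    rintro ⟨hjp, h⟩
    have h1 : p ∣ j * p - (j * p - 1) := Nat.dvd_sub (dvd_mul_left p j) h
    rw [show j * p - (j * p - 1) = 1 by omega] at h1
    exact hp.ne' (Nat.dvd_one.1 h1)
  rw [coeff_one_sub_X_mul_expand, if_pos (dvd_mul_left p j), if_neg this,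
    Nat.mul_div_cancel _ (by omega), sub_zero]

theorem coeff_one_sub_X_mul_expand_mul_add_one (hp : 1 < p) (f : R⟦X⟧) (j : ℕ) :
    coeff (j * p + 1) ((1 - X) * expand p (by omega) f) = -coeff j f := by
  have : ¬ p ∣ j * p + 1 := fun h =>
    hp.ne' (Nat.dvd_one.1 ((Nat.dvd_add_right (dvd_mul_left p j)).1 h))
  rw [coeff_one_sub_X_mul_expand, if_neg this, if_pos ⟨by omega, by simp⟩, Nat.add_sub_cancel,
    Nat.mul_div_cancel _ (by omega), zero_sub]

theorem coeff_one_sub_X_mul_expand_of_mod (hp : p ≠ 0) {m : ℕ} (h0 : m % p ≠ 0)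
    (h1 : m % p ≠ 1) (f : R⟦X⟧) :
    coeff m ((1 - X) * expand p hp f) = 0 := by
  have : ¬ (1 ≤ m ∧ p ∣ m - 1) := by
    rintro ⟨hm, c, hc⟩
    have hp1 : p ≠ 1 := by rintro rfl; exact h0 (Nat.mod_one m)
    rw [show m = p * c + 1 by omega, Nat.mul_add_mod, Nat.mod_eq_of_lt (by omega)] at h1
    exact h1 rfl
  rw [coeff_one_sub_X_mul_expand, if_neg (fun h => h0 (Nat.mod_eq_zero_of_dvd h)), if_neg this,
    sub_zero]

theorem prod_nthRootsFinset_one_sub_C_mul_X [IsDomain R] [Infinite R] {n : ℕ}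
    {ζ : R} (hζ : IsPrimitiveRoot ζ n) (hn : 0 < n) :
    ∏ η ∈ Polynomial.nthRootsFinset n (1 : R), (1 - C η * X) = (1 - X ^ n : R⟦X⟧) := by
  have hpoly : ∏ η ∈ Polynomial.nthRootsFinset n (1 : R), (1 - Polynomial.C η * Polynomial.X)
      = 1 - Polynomial.X ^ n := Polynomial.funext fun t => by
    simp only [Polynomial.eval_prod, Polynomial.eval_sub, Polynomial.eval_one,
      Polynomial.eval_mul, Polynomial.eval_C, Polynomial.eval_X, Polynomial.eval_pow]
    have := hζ.pow_sub_pow_eq_prod_sub_mul 1 t hn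
    rwa [one_pow, eq_comm] at this
  simpa using congrArg (Polynomial.coeToPowerSeries.ringHom (R := R)) hpoly

end PowerSeries

namespace AddChar

theorem map_multiset_sum {A M : Type*} [AddCommMonoid A] [CommMonoid M] (ψ : AddChar A M)
    (s : Multiset A) : ψ s.sum = (s.map ψ).prod := by
  induction s using Multiset.induction_on with
  | empty => simp
  | cons a s ih => simp [map_add_eq_mul, ih]

theorem sum_sym_eq_coeff_prod_mk_pow {A R : Type*} [AddCommMonoid A] [DecidableEq A]
    [CommSemiring R]
    (ψ : AddChar A R) (S : Finset A) (m : ℕ) :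
    ∑ s ∈ S.sym m, ψ (s : Multiset A).sum = coeff m (∏ a ∈ S, PowerSeries.mk fun n => ψ a ^ n) := by
  simp only [coeff_prod_mk_pow, map_multiset_sum]

theorem card_filter_apply_eq_card_ker {A M : Type*} [AddGroup A] [Fintype A] [CommMonoid M]
    [DecidableEq M] (ψ : AddChar A M) (c : A) : #{a | ψ a = ψ c} = #{a | ψ a = 1} := by
  refine card_nbij' (· - c) (· + c) (fun a ha => ?_) (fun a ha => ?_)
    (fun a _ => sub_add_cancel a c) (fun a _ => add_sub_cancel_right a c)
  · simp only [coe_filter, mem_univ, true_and, Set.mem_ofPred_eq] at ha ⊢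
    rw [sub_eq_add_neg, map_add_eq_mul, ha, ← map_add_eq_mul, add_neg_cancel, map_zero_eq_one]
  · simp only [coe_filter, mem_univ, true_and, Set.mem_ofPred_eq] at ha ⊢
    rw [map_add_eq_mul, ha, one_mul]

variable {F R : Type*} [Ring F] {p : ℕ} [hp : Fact p.Prime] [CharP F p]
  [CommRing R] [IsDomain R]

theorem apply_mem_nthRootsFinset (ψ : AddChar F R) (a : F) :
    ψ a ∈ Polynomial.nthRootsFinset p (1 : R) := by
  rw [Polynomial.mem_nthRootsFinset hp.out.pos, ← map_nsmul_eq_pow, nsmul_eq_mul,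
    CharP.cast_eq_zero, zero_mul, map_zero_eq_one]

theorem isPrimitiveRoot_apply_of_ne_one {ψ : AddChar F R} {b : F} (hb : ψ b ≠ 1) :
    IsPrimitiveRoot (ψ b) p :=
  isPrimitiveRoot_of_mem_nthRootsFinset hp.out (apply_mem_nthRootsFinset ψ b) hb

variable [Fintype F] [DecidableEq R]

theorem card_fiber_eq_card_div {ψ : AddChar F R} (hψ : ψ ≠ 1) {ζ : R}
    (hζ : ζ ∈ Polynomial.nthRootsFinset p (1 : R)) :
    #{a | ψ a = ζ} = Fintype.card F / p := by
  obtain ⟨b, hb⟩ := ne_one_iff.1 hψ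
  have hprim := isPrimitiveRoot_apply_of_ne_one (p := p) hb
  have hfiber : ∀ η ∈ Polynomial.nthRootsFinset p (1 : R), #{a | ψ a = η} = #{a | ψ a = 1} := by
    intro η hη
    obtain ⟨i, -, rfl⟩ :=
      hprim.eq_pow_of_pow_eq_one ((Polynomial.mem_nthRootsFinset hp.out.pos 1).1 hη)
    rw [← map_nsmul_eq_pow, card_filter_apply_eq_card_ker]
  have hcard : Fintype.card F = p * #{a | ψ a = 1} := by
    rw [← card_univ, card_eq_sum_card_fiberwise fun a _ => apply_mem_nthRootsFinset ψ a,
      sum_congr rfl hfiber, sum_const, hprim.card_nthRootsFinset, smul_eq_mul]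
  rw [hfiber ζ hζ, hcard, Nat.mul_div_cancel_left _ hp.out.pos]

variable [Infinite R]

theorem prod_one_sub_C_mul_X {ψ : AddChar F R} (hψ : ψ ≠ 1) :
    ∏ a, (1 - C (ψ a) * X : R⟦X⟧) = (1 - X ^ p) ^ (Fintype.card F / p) := by
  obtain ⟨b, hb⟩ := ne_one_iff.1 hψ
  rw [← prod_fiberwise_of_maps_to fun a _ => apply_mem_nthRootsFinset ψ a,
    ← prod_nthRootsFinset_one_sub_C_mul_X (isPrimitiveRoot_apply_of_ne_one hb) hp.out.pos,
    ← prod_pow]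
  refine prod_congr rfl fun η hη => ?_
  rw [prod_congr rfl fun a ha => by rw [(mem_filter.1 ha).2], prod_const,
    card_fiber_eq_card_div hψ hη]

theorem prod_erase_zero_mk_pow [DecidableEq F] {ψ : AddChar F R} (hψ : ψ ≠ 1) :
    ∏ a ∈ univ.erase 0, PowerSeries.mk (fun n => ψ a ^ n)
      = (1 - X) * expand p hp.out.ne_zero (invOneSubPow R (Fintype.card F / p)).val := by
  set U := ∏ a ∈ univ.erase 0, (1 - C (ψ a) * X : R⟦X⟧)
  have hU : (1 - X) * U = ∏ a, (1 - C (ψ a) * X) := by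
    rw [← mul_prod_erase univ _ (mem_univ 0), map_zero_eq_one, map_one, one_mul]
  refine left_inv_eq_right_inv (a := U) ?_ ?_
  · rw [← prod_mul_distrib]
    exact prod_eq_one fun a _ => mk_pow_mul_one_sub_C_mul_X _
  · rw [mul_left_comm, ← mul_assoc, hU, prod_one_sub_C_mul_X hψ, mul_comm,
      expand_invOneSubPow_mul_one_sub_X_pow_pow]

end AddChar

section Counting

variable {F : Type*} [Field F] [Fintype F] [DecidableEq F]

theorem partitionCount_eq_card_filter_sym (m : ℕ) (z : F) :
    partitionCount F m z
      = #(((univ.erase (0 : F)).sym m).filter fun s : Sym F m => (s : Multiset F).sum = z) := by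
  unfold partitionCount
  congr 1
  ext s
  simp only [mem_filter, mem_univ, true_and, mem_sym_iff, mem_erase, and_true]
  exact and_congr_left' ⟨fun h a ha h0 => h (h0 ▸ ha), fun h h0 => h 0 h0 rfl⟩

theorem card_mul_partitionCount (p : ℕ) [hp : Fact p.Prime] [CharP F p] (m : ℕ) (z : F) :
    (Fintype.card F : ℂ) * partitionCount F m z
      = (Fintype.card F + m - 2).choose m
        + ((if z = 0 then (Fintype.card F : ℂ) else 0) - 1)
          * coeff m ((1 - X) *
              expand p hp.out.ne_zero (invOneSubPow ℂ (Fintype.card F / p)).val) := by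
  set q := Fintype.card F
  set S := univ.erase (0 : F)
  set d := coeff m ((1 - X) * expand p hp.out.ne_zero (invOneSubPow ℂ (q / p)).val)
  obtain ⟨ψ, hψ⟩ : ∃ ψ : AddChar F ℂ, ψ.IsPrimitive :=
    ⟨_, AddChar.FiniteField.primitiveChar_to_Complex_isPrimitive F⟩
  have hsum : ∀ t : F, ∑ s ∈ S.sym m, ψ (t * (s : Multiset F).sum)
      = if t = 0 then ((q + m - 2).choose m : ℂ) else d := by
    intro t
    split_ifs with ht
    · have hq : 1 < q := Fintype.one_lt_card
      have hS : #S = q - 1 := by simp [S, card_erase_of_mem, q]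
      have h := (1 : AddChar F ℂ).sum_sym_eq_coeff_prod_mk_pow S m
      simp only [AddChar.one_apply, one_pow, prod_const] at h
      simp only [ht, zero_mul, AddChar.map_zero_eq_one]
      rw [h, ← Pi.one_def, coeff_mk_one_pow (by omega), hS, show q - 1 - 1 + m = q + m - 2 by omega]
    · change ∑ s ∈ S.sym m, ψ.mulShift t (s : Multiset F).sum = d
      rw [AddChar.sum_sym_eq_coeff_prod_mk_pow, AddChar.prod_erase_zero_mk_pow (hψ ht)]
  calc (q : ℂ) * partitionCount F m z
      = ∑ s ∈ S.sym m, ∑ t, ψ (t * ((s : Multiset F).sum - z)) := by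
        rw [partitionCount_eq_card_filter_sym, card_filter, Nat.cast_sum, mul_sum]
        refine sum_congr rfl fun s _ => ?_
        rw [AddChar.sum_mulShift _ hψ]
        simp only [sub_eq_zero]
        split_ifs <;> simp [q]
    _ = ∑ t, ψ (t * -z) * ∑ s ∈ S.sym m, ψ (t * (s : Multiset F).sum) := by
        rw [sum_comm]
        refine sum_congr rfl fun t _ => ?_
        rw [mul_sum]
        refine sum_congr rfl fun s _ => ?_
        rw [← AddChar.map_add_eq_mul]
        congr 1
        ring
    _ = ∑ t, (ψ (t * -z) * d + if t = 0 then ((q + m - 2).choose m : ℂ) - d else 0) := by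
        refine sum_congr rfl fun t _ => ?_
        rw [hsum]
        split_ifs with ht <;> simp [ht]
    _ = _ := by
        rw [sum_add_distrib, ← sum_mul, AddChar.sum_mulShift _ hψ, sum_ite_eq' univ (0 : F)]
        simp only [neg_eq_zero, mem_univ, if_true]
        split_ifs <;> push_cast <;> ring

theorem partitionCount_eq (p : ℕ) [hp : Fact p.Prime] [CharP F p] (m : ℕ) (z : F) {d : ℚ}
    (hd : coeff m ((1 - X) * expand p hp.out.ne_zero (invOneSubPow ℂ (Fintype.card F / p)).val)
      = (d : ℂ)) :
    (partitionCount F m z : ℚ) = (Fintype.card F + m - 2).choose m / Fintype.card F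
      + ((if z = 0 then (Fintype.card F : ℚ) else 0) - 1) / Fintype.card F * d := by
  have h := card_mul_partitionCount p m z
  have hq : (Fintype.card F : ℂ) ≠ 0 := Nat.cast_ne_zero.2 Fintype.card_ne_zero
  rw [hd] at h
  apply Rat.cast_injective (α := ℂ)
  split_ifs at h ⊢ <;> push_cast <;> field_simp <;> linear_combination h

end Counting

theorem stmt_3 (F : Type*) [Field F] [Fintype F] [DecidableEq F]
    (p : ℕ) [Fact p.Prime] [CharP F p] (q : ℕ) (hq : q = Fintype.card F)
    (m : ℕ) (z : F) :
    (¬ m % p = 0 → ¬ m % p = 1 →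
      (partitionCount F m z : ℚ) = (Nat.choose (q + m - 2) m : ℚ) / q) ∧
    (∀ j : ℕ, m = j * p →
      (z = 0 →
        (partitionCount F m z : ℚ) = (Nat.choose (q + m - 2) m : ℚ) / q
          + (q - 1) / q * (Nat.choose (q / p - 1 + j) j : ℚ)) ∧
      (z ≠ 0 →
        (partitionCount F m z : ℚ) = (Nat.choose (q + m - 2) m : ℚ) / q
          - (1 / q) * (Nat.choose (q / p - 1 + j) j : ℚ))) ∧
    (∀ j : ℕ, m = j * p + 1 →
      (z = 0 →
        (partitionCount F m z : ℚ) = (Nat.choose (q + m - 2) m : ℚ) / q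
          - (q - 1) / q * (Nat.choose (q / p - 1 + j) j : ℚ)) ∧
      (z ≠ 0 →
        (partitionCount F m z : ℚ) = (Nat.choose (q + m - 2) m : ℚ) / q
          + (1 / q) * (Nat.choose (q / p - 1 + j) j : ℚ))) := by
  subst hq
  have hp : 1 < p := (Fact.out : p.Prime).one_lt
  have hk : Fintype.card F / p ≠ 0 := (Nat.div_pos (Nat.le_of_dvd Fintype.card_pos
    ((prime_dvd_char_iff_dvd_card p).1 (by rw [ringChar.eq F p]))) (by omega)).ne'
  refine ⟨fun h0 h1 => ?_, fun j hj => ?_, fun j hj => ?_⟩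
  · rw [partitionCount_eq p m z (d := 0) (by simp [coeff_one_sub_X_mul_expand_of_mod _ h0 h1])]
    ring
  · subst hj
    rw [partitionCount_eq p _ z (d := (Fintype.card F / p - 1 + j).choose j)
      (by rw [coeff_one_sub_X_mul_expand_mul hp, coeff_invOneSubPow hk]; norm_cast)]
    exact ⟨fun hz => by simp only [hz, ↓reduceIte], fun hz => by simp only [hz, ↓reduceIte]; ring⟩
  · subst hj
    rw [partitionCount_eq p _ z (d := -(Fintype.card F / p - 1 + j).choose j)
      (by rw [coeff_one_sub_X_mul_expand_mul_add_one hp, coeff_invOneSubPow hk]; norm_cast)]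
    refine ⟨fun hz => ?_, fun hz => ?_⟩ <;> (simp only [hz, ↓reduceIte]; ring)
end
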